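/- arXiv:1304.6140 — 2 statements merged into one kernel-verified Lean document; each statement's English description precedes it below -/
import Mathlib

section
/- For all x, y ∈ ℝ, t > 0, ε > 0, and exponents 0 ≤ δ ≤ p, the Gaussian kernel satisfies |ψ_{t+ε}^x(y) − ψ_t^x(y)|^p ≤ (ε t^{-3/2})^δ ((ψ_{t+ε}^x(y))^{p−δ} + (ψ_t^x(y))^{p−δ}). -/
/-! The time derivative `∂ₜψ = ψ · ((y - x)² / (2t²) - 1 / (2t))` is a difference of two
nonnegative terms, each at most `t^(-3/2)` because `u e^(-u) ≤ 1` and `(2π)^(-1/2) ≤ 1`; as this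
bound decreases in `t`, the mean value theorem gives `|ψ_{t+ε} - ψ_t| ≤ ε t^(-3/2)`.
Interpolating it with the bound `|a - b| ≤ max a b` for `a, b ≥ 0` through
`|a - b|^p = |a - b|^δ |a - b|^(p - δ)` gives the claim. -/

open MeasureTheory Real

/-- Gaussian (heat) kernel ψ_t^x(y) = (2πt)^{-1/2} exp(-(y-x)²/(2t)). -/
noncomputable def psi (t x y : ℝ) : ℝ :=
  (2 * Real.pi * t) ^ (-(1/2) : ℝ) * Real.exp (-(y - x) ^ 2 / (2 * t))

lemma abs_sub_le_max_of_nonneg {a b : ℝ} (ha : 0 ≤ a) (hb : 0 ≤ b) : |a - b| ≤ max a b :=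
  abs_sub_le_iff.2 ⟨by linarith [le_max_left a b], by linarith [le_max_right a b]⟩

lemma max_rpow_le_rpow_add_rpow {a b : ℝ} (ha : 0 ≤ a) (hb : 0 ≤ b) (r : ℝ) :
    max a b ^ r ≤ a ^ r + b ^ r := by
  rcases le_total a b with h | h
  · rw [max_eq_right h]; linarith [rpow_nonneg ha r]
  · rw [max_eq_left h]; linarith [rpow_nonneg hb r]

lemma abs_sub_rpow_le_rpow_mul_add_rpow {a b K δ p : ℝ} (ha : 0 ≤ a) (hb : 0 ≤ b)
    (hK : |a - b| ≤ K) (hδ : 0 ≤ δ) (hδp : δ ≤ p) :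
    |a - b| ^ p ≤ K ^ δ * (a ^ (p - δ) + b ^ (p - δ)) := by
  have hd : 0 ≤ |a - b| := abs_nonneg _
  have hK0 : 0 ≤ K ^ δ := rpow_nonneg (hd.trans hK) δ
  calc |a - b| ^ p = |a - b| ^ δ * |a - b| ^ (p - δ) := by
        rw [← rpow_add_of_nonneg hd hδ (sub_nonneg.2 hδp), add_sub_cancel]
    _ ≤ K ^ δ * max a b ^ (p - δ) := by
        gcongr
        exact abs_sub_le_max_of_nonneg ha hb
    _ ≤ K ^ δ * (a ^ (p - δ) + b ^ (p - δ)) := by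
        gcongr
        exact max_rpow_le_rpow_add_rpow ha hb _

lemma psi_pos (x y : ℝ) {t : ℝ} (ht : 0 < t) : 0 < psi t x y := by
  unfold psi; positivity

lemma psi_eq_of_pos (x y : ℝ) {t : ℝ} (ht : 0 < t) :
    psi t x y = (2 * π) ^ (-(1/2) : ℝ) * t ^ (-(1/2) : ℝ) * exp (-((y - x) ^ 2 / (2 * t))) := by
  rw [psi, mul_rpow (by positivity) ht.le, neg_div]

lemma psi_hasDerivAt (x y : ℝ) {s : ℝ} (hs : 0 < s) :
    HasDerivAt (fun u => psi u x y)
      (psi s x y * ((y - x) ^ 2 / (2 * s ^ 2) - 1 / (2 * s))) s := by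
  have hprefactor : HasDerivAt (fun u : ℝ => (2 * π * u) ^ (-(1/2) : ℝ))
      (2 * π * (-(1/2) : ℝ) * (2 * π * s) ^ ((-(1/2) : ℝ) - 1)) s :=
    ((hasDerivAt_id' s).const_mul (2 * π)).rpow_const (Or.inl (by positivity)) |>.congr_deriv
      (by ring)
  have hexponent : HasDerivAt (fun u : ℝ => -(y - x) ^ 2 / (2 * u))
      ((y - x) ^ 2 / (2 * s ^ 2)) s := by
    refine ((hasDerivAt_const s _).div ((hasDerivAt_id' s).const_mul 2) (by positivity)).congr_deriv ?_
    field_simp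
    ring
  refine (hprefactor.mul hexponent.exp).congr_deriv ?_
  rw [psi, rpow_sub (by positivity), rpow_one]
  field_simp
  ring

lemma abs_psi_time_deriv_le (x y : ℝ) {s : ℝ} (hs : 0 < s) :
    |psi s x y * ((y - x) ^ 2 / (2 * s ^ 2) - 1 / (2 * s))| ≤ s ^ (-(3/2) : ℝ) := by
  set u := (y - x) ^ 2 / (2 * s)
  set c := (2 * π) ^ (-(1/2) : ℝ)
  set k := s ^ (-(1/2) : ℝ) / s
  have hc : c ≤ 1 := rpow_le_one_of_one_le_of_nonpos (by linarith [pi_gt_three]) (by norm_num)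
  have hu : u * exp (-u) ≤ 1 :=
    (mul_exp_neg_le_exp_neg_one u).trans (exp_le_one_iff.2 (by norm_num))
  have he : exp (-u) ≤ 1 := exp_le_one_iff.2 (neg_nonpos.2 (by positivity))
  have hk : s ^ (-(3/2) : ℝ) = k := by
    simp only [k]; rw [← rpow_sub_one hs.ne']; norm_num
  have hsplit : psi s x y * ((y - x) ^ 2 / (2 * s ^ 2) - 1 / (2 * s)) =
      c * k * (u * exp (-u)) - c * k * (exp (-u) / 2) := by
    simp only [c, k, u]; rw [psi_eq_of_pos x y hs]; field_simp
  rw [hsplit, hk]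
  refine (abs_sub_le_max_of_nonneg (by positivity) (by positivity)).trans (max_le ?_ ?_)
  · calc c * k * (u * exp (-u)) ≤ 1 * k * 1 := by gcongr
      _ = k := by ring
  · calc c * k * (exp (-u) / 2) ≤ 1 * k * 1 := by gcongr; linarith
      _ = k := by ring

lemma abs_psi_add_sub_psi_le (x y : ℝ) {t ε : ℝ} (ht : 0 < t) (hε : 0 ≤ ε) :
    |psi (t + ε) x y - psi t x y| ≤ ε * t ^ (-(3/2) : ℝ) := by
  have hmvt := norm_image_sub_le_of_norm_deriv_le_segment' (a := t) (b := t + ε)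
    (C := t ^ (-(3/2) : ℝ)) (f := fun u => psi u x y)
    (fun u hu => (psi_hasDerivAt x y (ht.trans_le hu.1)).hasDerivWithinAt)
    (fun u hu => (abs_psi_time_deriv_le x y (ht.trans_le hu.1)).trans
      (rpow_le_rpow_of_nonpos ht hu.1 (by norm_num)))
    (t + ε) (Set.right_mem_Icc.2 (by linarith))
  rw [Real.norm_eq_abs, add_sub_cancel_left, mul_comm] at hmvt
  exact hmvt

/-- Time-increment bound for the heat kernel:
|ψ_{t+ε}^x(y) − ψ_t^x(y)|^p ≤ (ε t^{-3/2})^δ ((ψ_{t+ε}^x(y))^{p−δ} + (ψ_t^x(y))^{p−δ}). -/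
theorem heat_kernel_time_increment (x y t ε δ p : ℝ) (ht : 0 < t) (hε : 0 < ε)
    (hδ0 : 0 ≤ δ) (hδp : δ ≤ p) :
    |psi (t + ε) x y - psi t x y| ^ p ≤
      (ε * t ^ (-(3/2) : ℝ)) ^ δ *
        ((psi (t + ε) x y) ^ (p - δ) + (psi t x y) ^ (p - δ)) :=
  abs_sub_rpow_le_rpow_mul_add_rpow (psi_pos x y (by linarith)).le (psi_pos x y ht).le
    (abs_psi_add_sub_psi_le x y ht hε.le) hδ0 hδp
end

section
/- Let Y^1, Y^2 be two independent simple random walks on ℤ started at 0. For every β > 0 and K > 0, sup_N E[(1 + β^2 N^{-1/2})^{#{1 ≤ i ≤ ⌊KN⌋ : Y^1_i = Y^2_i}}] < ∞, i.e., the exponential collision moments are bounded uniformly in N. -/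
/-- Position after `i` steps of the walk whose step signs are given by `ε`
(each `Bool` encodes a ±1 step); this realizes a simple random walk on ℤ started at 0
when `ε` is uniform. -/
def walkOf {m : ℕ} (ε : Fin m → Bool) (i : ℕ) : ℤ :=
  ∑ j ∈ Finset.univ.filter (fun j : Fin m => (j : ℕ) < i), (if ε j then 1 else -1)

/-- Number of collisions of two walks in time window {1, …, m}. -/
def collisions (m : ℕ) (ε η : Fin m → Bool) : ℕ :=
  ((Finset.Icc 1 m).filter (fun i => walkOf ε i = walkOf η i)).card

/-!
Write `x = β² N^{-1/2}` and `u m = 4^{-m} ∑_{ε,η} (1 + x)^{collisions m ε η}`. Expanding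
`(1 + x)^{#C} = 1 + x ∑_{t ∈ C} (1 + x)^{#{i ∈ C | t < i}}` at the first collision time `t` and
restarting both walks there (the two walks meet at time `t` for `binom(2t, t)` of the `4^t` pairs
of paths) gives the renewal equation `u m = 1 + x ∑_{t=1}^m 4^{-t} binom(2t, t) u (m - t)`, with
`4^{-t} binom(2t, t) ≤ t^{-1/2}`. The kernel `t^{-1/2}` convolved with itself is bounded by `4`
(discrete analogue of the simplex integral), so substituting the inequality into itself gives
`u m ≤ 1 + 2x√m + 4x² ∑_{n<m} u n`, and a discrete Grönwall argument yields
`u m ≤ (1 + 2x√m) exp (4x²m)`. This is bounded uniformly in `N` because `x²m ≤ β⁴K`.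
-/

open Finset Real

lemma one_add_pow_card_eq_one_add_sum {ι R : Type*} [LinearOrder ι] [CommSemiring R]
    (s : Finset ι) (x : R) : (1 + x) ^ #s = 1 + ∑ i ∈ s, x * (1 + x) ^ #{j ∈ s | i < j} := by
  induction s using Finset.induction_on_min with
  | empty => simp
  | insert a s ha ih =>
    have ha' : a ∉ s := fun h => lt_irrefl a (ha a h)
    have hfilter (i) (hi : i ∈ s) : {j ∈ insert a s | i < j} = {j ∈ s | i < j} := by
      rw [filter_insert, if_neg (ha i hi).not_gt]
    rw [card_insert_of_notMem ha', sum_insert ha', filter_insert, if_neg (lt_irrefl a),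
      filter_true_of_mem ha, sum_congr rfl fun i hi => by rw [hfilter i hi], add_left_comm, ← ih]
    ring

lemma sum_fun_fin_add_eq_sum_append {α M : Type*} [Fintype α] [AddCommMonoid M] {t s : ℕ}
    (f : (Fin (t + s) → α) → M) :
    ∑ x, f x = ∑ a : Fin t → α, ∑ b : Fin s → α, f (Fin.append a b) := by
  rw [← (Fin.appendEquiv t s).sum_comp, Fintype.sum_prod_type]
  rfl

lemma walkOf_append {t s : ℕ} (a : Fin t → Bool) (b : Fin s → Bool) (i : ℕ) :
    walkOf (Fin.append a b) i = walkOf a (min i t) + walkOf b (i - t) := by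
  simp only [walkOf, sum_filter, Fin.sum_univ_add, Fin.append_left, Fin.append_right,
    Fin.val_castAdd, Fin.val_natAdd]
  congr 1 <;> refine sum_congr rfl fun j _ => if_congr ?_ rfl rfl <;> omega

lemma walkOf_append_at_length {t s : ℕ} (a : Fin t → Bool) (b : Fin s → Bool) :
    walkOf (Fin.append a b) t = walkOf a t := by
  rw [walkOf_append, min_self, Nat.sub_self]
  simp [walkOf]

lemma walkOf_append_add {t s : ℕ} (a : Fin t → Bool) (b : Fin s → Bool) (i : ℕ) :
    walkOf (Fin.append a b) (t + i) = walkOf a t + walkOf b i := by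
  simp [walkOf_append]

lemma walkOf_eq_two_mul_card_sub {t : ℕ} (a : Fin t → Bool) : walkOf a t = 2 * #{j | a j} - t := by
  have step (j : Fin t) : (if a j then (1 : ℤ) else -1) = 2 * (if a j then 1 else 0) - 1 := by
    split <;> norm_num
  rw [walkOf, filter_true_of_mem fun j _ => j.2, sum_congr rfl fun j _ => step j,
    sum_sub_distrib, ← mul_sum, sum_boole]
  simp

lemma card_filter_card_eq_choose (t k : ℕ) : #{a : Fin t → Bool | #{j | a j} = k} = t.choose k := by
  have h := card_powersetCard k (univ : Finset (Fin t))
  rw [card_univ, Fintype.card_fin] at h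
  rw [← h]
  refine card_nbij' (fun a => ({j | a j} : Finset (Fin t))) (fun S j => decide (j ∈ S))
    ?_ ?_ ?_ ?_ <;> intro x hx <;> simp_all [mem_powersetCard]

lemma card_walkOf_eq_walkOf (t : ℕ) :
    #{p : (Fin t → Bool) × (Fin t → Bool) | walkOf p.1 t = walkOf p.2 t} = t.centralBinom := by
  rw [Nat.centralBinom_eq_two_mul_choose, ← Nat.sum_range_choose_sq,
    card_eq_sum_card_fiberwise (f := fun p => #{j | p.1 j}) (t := range (t + 1))]
  · refine sum_congr rfl fun k _ => ?_
    rw [sq, ← card_filter_card_eq_choose, ← card_product]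
    congr 1
    ext p
    simp only [mem_filter, mem_univ, true_and, mem_product, walkOf_eq_two_mul_card_sub]
    omega
  · intro p _
    simpa [Nat.lt_succ_iff] using card_filter_le univ fun j => p.1 j

lemma card_collisions_after_of_walkOf_eq {t s : ℕ} {a a' : Fin t → Bool}
    (h : walkOf a t = walkOf a' t) (b b' : Fin s → Bool) :
    #{i ∈ {i ∈ Icc 1 (t + s) | walkOf (Fin.append a b) i = walkOf (Fin.append a' b') i} | t < i}
      = collisions s b b' := by
  have hIcc : {i ∈ Icc 1 (t + s) | t < i} = (Icc 1 s).map (addLeftEmbedding t) := by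
    rw [map_add_left_Icc]
    ext i
    simp only [mem_filter, mem_Icc]
    omega
  rw [filter_comm, hIcc, filter_map, card_map, collisions]
  congr 1
  refine filter_congr fun j _ => ?_
  simp [walkOf_append_add, h]

noncomputable def collisionSum (x : ℝ) (m : ℕ) : ℝ :=
  ∑ ε : Fin m → Bool, ∑ η : Fin m → Bool, (1 + x) ^ collisions m ε η

lemma sum_collide_at_eq_centralBinom_mul (x : ℝ) (t s : ℕ) :
    ∑ ε : Fin (t + s) → Bool, ∑ η : Fin (t + s) → Bool,
      (if walkOf ε t = walkOf η t then
        (1 + x) ^ #{i ∈ {i ∈ Icc 1 (t + s) | walkOf ε i = walkOf η i} | t < i} else 0)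
      = t.centralBinom * collisionSum x s := by
  have hsplit (a a' : Fin t → Bool) (b b' : Fin s → Bool) :
      (if walkOf (Fin.append a b) t = walkOf (Fin.append a' b') t then
        (1 + x) ^ #{i ∈ {i ∈ Icc 1 (t + s) |
          walkOf (Fin.append a b) i = walkOf (Fin.append a' b') i} | t < i} else 0)
        = (if walkOf a t = walkOf a' t then 1 else 0) * (1 + x) ^ collisions s b b' := by
    rw [walkOf_append_at_length, walkOf_append_at_length]
    split_ifs with h
    · rw [card_collisions_after_of_walkOf_eq h, one_mul]
    · rw [zero_mul]
  simp only [sum_fun_fin_add_eq_sum_append (t := t) (s := s), hsplit]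
  rw [← card_walkOf_eq_walkOf, card_eq_sum_ones, sum_filter]
  push_cast
  rw [collisionSum, sum_mul, Fintype.sum_prod_type]
  refine sum_congr rfl fun a _ => ?_
  rw [sum_comm]
  refine sum_congr rfl fun a' _ => ?_
  simp only [mul_sum]

lemma collisionSum_eq_four_pow_add (x : ℝ) (m : ℕ) :
    collisionSum x m = 4 ^ m + x * ∑ t ∈ Icc 1 m, t.centralBinom * collisionSum x (m - t) := by
  have hexpand (ε η : Fin m → Bool) : (1 + x) ^ collisions m ε η = 1 + x * ∑ t ∈ Icc 1 m,
      if walkOf ε t = walkOf η t then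
        (1 + x) ^ #{i ∈ {i ∈ Icc 1 m | walkOf ε i = walkOf η i} | t < i} else 0 := by
    rw [collisions, one_add_pow_card_eq_one_add_sum, sum_filter, mul_sum]
    congr 1
    exact sum_congr rfl fun t _ => by split_ifs <;> simp
  simp only [collisionSum, hexpand, sum_add_distrib, ← mul_sum]
  congr 1
  · norm_num [← mul_pow]
  · congr 1
    simp only [sum_comm (β := ℝ) (t := Icc 1 m)]
    refine sum_congr rfl fun t ht => ?_
    obtain ⟨s, rfl⟩ := Nat.exists_eq_add_of_le (mem_Icc.mp ht).2
    rw [Nat.add_sub_cancel_left]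
    exact sum_collide_at_eq_centralBinom_mul x t s

lemma centralBinom_sq_mul_le (t : ℕ) : t.centralBinom ^ 2 * (2 * t + 1) ≤ 16 ^ t := by
  induction t with
  | zero => simp
  | succ t ih =>
    refine Nat.le_of_mul_le_mul_right ?_ (pow_pos t.succ_pos 2)
    calc (t + 1).centralBinom ^ 2 * (2 * (t + 1) + 1) * (t + 1) ^ 2
        = ((t + 1) * (t + 1).centralBinom) ^ 2 * (2 * t + 3) := by ring
      _ = 4 * (2 * t + 1) * (2 * t + 3) * (t.centralBinom ^ 2 * (2 * t + 1)) := by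
        rw [Nat.succ_mul_centralBinom_succ]; ring
      _ ≤ 16 * (t + 1) ^ 2 * 16 ^ t := Nat.mul_le_mul (by nlinarith) ih
      _ = 16 ^ (t + 1) * (t + 1) ^ 2 := by ring

lemma centralBinom_mul_sqrt_le_four_pow (t : ℕ) : t.centralBinom * √t ≤ 4 ^ t := by
  have h : ((t.centralBinom : ℝ) * √t) ^ 2 ≤ (4 ^ t) ^ 2 := by
    have := (Nat.cast_le (α := ℝ)).mpr (centralBinom_sq_mul_le t)
    push_cast at this
    rw [mul_pow, sq_sqrt t.cast_nonneg, ← pow_mul, mul_comm t, pow_mul]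
    norm_num
    nlinarith [sq_nonneg (t.centralBinom : ℝ)]
  exact (pow_le_pow_iff_left₀ (by positivity) (by positivity) two_ne_zero).mp h

lemma inv_sqrt_mul_inv_sqrt_le (a b : ℝ) :
    (√a)⁻¹ * (√b)⁻¹ ≤ (√(a + b))⁻¹ * ((√a)⁻¹ + (√b)⁻¹) := by
  rcases (sqrt_nonneg a).eq_or_lt with ha | ha
  · rw [← ha, inv_zero, zero_mul]; positivity
  rcases (sqrt_nonneg b).eq_or_lt with hb | hb
  · rw [← hb, inv_zero, mul_zero]; positivity
  have hab : √(a + b) ≤ √a + √b := by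
    rw [sqrt_le_left (by positivity), add_sq, sq_sqrt (sqrt_pos.mp ha).le,
      sq_sqrt (sqrt_pos.mp hb).le]
    nlinarith [mul_pos ha hb]
  calc (√a)⁻¹ * (√b)⁻¹ = (√a + √b)⁻¹ * ((√a)⁻¹ + (√b)⁻¹) := by field_simp; ring
    _ ≤ (√(a + b))⁻¹ * ((√a)⁻¹ + (√b)⁻¹) := by
      gcongr
      exact sqrt_pos.mpr (add_pos (sqrt_pos.mp ha) (sqrt_pos.mp hb))

-- Sums below may include `t = 0`: its term vanishes because `(√0)⁻¹ = 0`.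
lemma sum_range_inv_sqrt_le (m : ℕ) : ∑ t ∈ range (m + 1), (√t)⁻¹ ≤ 2 * √m := by
  induction m with
  | zero => simp
  | succ m ih =>
    rw [sum_range_succ]
    have hm : (0 : ℝ) < √(m + 1 : ℕ) := sqrt_pos.mpr (by positivity)
    have step : (√(m + 1 : ℕ))⁻¹ ≤ 2 * (√(m + 1 : ℕ) - √m) := by
      rw [inv_le_iff_one_le_mul₀' hm]
      have h1 := sq_sqrt (Nat.cast_nonneg (α := ℝ) (m + 1))
      have h2 := sq_sqrt (Nat.cast_nonneg (α := ℝ) m)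
      push_cast at h1 ⊢
      nlinarith [sq_nonneg (√((m : ℝ) + 1) - √m)]
    linarith

lemma sum_antidiagonal_inv_sqrt_mul_inv_sqrt_le (s : ℕ) :
    ∑ p ∈ antidiagonal s, (√p.1)⁻¹ * (√p.2)⁻¹ ≤ 4 := by
  have hpoint (p) (hp : p ∈ antidiagonal s) :
      (√p.1)⁻¹ * (√p.2)⁻¹ ≤ (√s)⁻¹ * ((√p.1)⁻¹ + (√p.2)⁻¹) := by
    rw [← mem_antidiagonal.mp hp, Nat.cast_add]
    exact inv_sqrt_mul_inv_sqrt_le _ _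
  have hsym : ∑ p ∈ antidiagonal s, (√p.2)⁻¹ = ∑ p ∈ antidiagonal s, (√p.1)⁻¹ :=
    Nat.sum_antidiagonal_swap (f := fun p => (√p.1)⁻¹)
  have hone : ∑ p ∈ antidiagonal s, (√p.1)⁻¹ ≤ 2 * √s := by
    rw [Nat.sum_antidiagonal_eq_sum_range_succ_mk]
    exact sum_range_inv_sqrt_le s
  calc ∑ p ∈ antidiagonal s, (√p.1)⁻¹ * (√p.2)⁻¹
      ≤ ∑ p ∈ antidiagonal s, (√s)⁻¹ * ((√p.1)⁻¹ + (√p.2)⁻¹) := sum_le_sum hpoint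
    _ = (√s)⁻¹ * (2 * ∑ p ∈ antidiagonal s, (√p.1)⁻¹) := by
      rw [← mul_sum, sum_add_distrib, hsym, two_mul]
    _ ≤ (√s)⁻¹ * (2 * (2 * √s)) := by gcongr
    _ ≤ 4 := by
      rcases (sqrt_nonneg (s : ℝ)).eq_or_lt with hs | hs
      · simp [← hs]
      · field_simp; norm_num

lemma sum_antidiagonal_antidiagonal_assoc {M : Type*} [AddCommMonoid M] (f : ℕ → ℕ → ℕ → M)
    (m : ℕ) : ∑ p ∈ antidiagonal m, ∑ q ∈ antidiagonal p.2, f p.1 q.1 q.2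
      = ∑ p ∈ antidiagonal m, ∑ q ∈ antidiagonal p.1, f q.1 q.2 p.2 := by
  simp only [sum_sigma']
  apply sum_nbij' (fun ⟨⟨i, _⟩, ⟨j, k⟩⟩ ↦ ⟨(i + j, k), (i, j)⟩)
    (fun ⟨⟨_, k⟩, ⟨i, j⟩⟩ ↦ ⟨(i, j + k), (j, k)⟩) <;> aesop (add simp [add_assoc])

lemma le_add_mul_sum_of_renewal {u : ℕ → ℝ} {x : ℝ} (hx : 0 ≤ x) (hu : ∀ m, 0 ≤ u m)
    (hrec : ∀ m, u m ≤ 1 + x * ∑ p ∈ antidiagonal m, (√p.1)⁻¹ * u p.2) (m : ℕ) :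
    u m ≤ 1 + 2 * x * √m + 4 * x ^ 2 * ∑ n ∈ range m, u n := by
  set c : ℕ → ℝ := fun s => ∑ q ∈ antidiagonal s, (√q.1)⁻¹ * (√q.2)⁻¹
  have hc : ∑ p ∈ antidiagonal m, c p.1 * u p.2 ≤ 4 * ∑ n ∈ range m, u n := by
    rw [← Nat.sum_antidiagonal_swap, Nat.sum_antidiagonal_eq_sum_range_succ_mk, sum_range_succ,
      mul_sum]
    simp only [Prod.swap, Nat.sub_self]
    have hc0 : c 0 = 0 := by simp [c]
    rw [hc0, zero_mul, add_zero]
    exact sum_le_sum fun n _ => mul_le_mul_of_nonneg_right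
      (sum_antidiagonal_inv_sqrt_mul_inv_sqrt_le _) (hu n)
  calc u m ≤ 1 + x * ∑ p ∈ antidiagonal m, (√p.1)⁻¹ * u p.2 := hrec m
    _ ≤ 1 + x * ∑ p ∈ antidiagonal m, (√p.1)⁻¹ *
          (1 + x * ∑ q ∈ antidiagonal p.2, (√q.1)⁻¹ * u q.2) := by
      gcongr with p
      exact hrec p.2
    _ = 1 + x * ∑ p ∈ antidiagonal m, (√p.1)⁻¹ + x ^ 2 * ∑ p ∈ antidiagonal m, c p.1 * u p.2 := by
      simp only [c, mul_add, mul_one, sum_add_distrib, mul_sum, sum_mul]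
      rw [sum_antidiagonal_antidiagonal_assoc (fun i j k => x * ((√i)⁻¹ * (x * ((√j)⁻¹ * u k)))),
        add_assoc]
      congr 2
      refine sum_congr rfl fun p _ => sum_congr rfl fun q _ => by ring
    _ ≤ 1 + x * (2 * √m) + x ^ 2 * (4 * ∑ n ∈ range m, u n) := by
      gcongr
      rw [Nat.sum_antidiagonal_eq_sum_range_succ_mk]
      exact sum_range_inv_sqrt_le m
    _ = 1 + 2 * x * √m + 4 * x ^ 2 * ∑ n ∈ range m, u n := by ring

lemma le_mul_pow_of_le_add_mul_sum {v a : ℕ → ℝ} {b : ℝ} (ha : Monotone a) (hb : 0 ≤ b)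
    (h : ∀ m, v m ≤ a m + b * ∑ n ∈ range m, v n) (m : ℕ) : v m ≤ a m * (1 + b) ^ m := by
  induction m using Nat.strong_induction_on with
  | _ m ih =>
  have hgeom : b * ∑ n ∈ range m, (1 + b) ^ n = (1 + b) ^ m - 1 := by
    rw [mul_comm, ← geom_sum_mul, add_sub_cancel_left]
  calc v m ≤ a m + b * ∑ n ∈ range m, v n := h m
    _ ≤ a m + b * ∑ n ∈ range m, a m * (1 + b) ^ n := by
      gcongr with n hn
      exact (ih n (mem_range.mp hn)).trans
        (mul_le_mul_of_nonneg_right (ha (mem_range.mp hn).le) (by positivity))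
    _ = a m * (1 + b) ^ m := by rw [← mul_sum, mul_left_comm, hgeom]; ring

theorem le_mul_exp_of_renewal {u : ℕ → ℝ} {x : ℝ} (hx : 0 ≤ x) (hu : ∀ m, 0 ≤ u m)
    (hrec : ∀ m, u m ≤ 1 + x * ∑ p ∈ antidiagonal m, (√p.1)⁻¹ * u p.2) (m : ℕ) :
    u m ≤ (1 + 2 * x * √m) * exp (4 * x ^ 2 * m) := by
  have hmono : Monotone fun m : ℕ => 1 + 2 * x * √m := fun i j hij => by dsimp only; gcongr
  calc u m ≤ (1 + 2 * x * √m) * (1 + 4 * x ^ 2) ^ m :=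
        le_mul_pow_of_le_add_mul_sum hmono (by positivity) (le_add_mul_sum_of_renewal hx hu hrec) m
    _ ≤ (1 + 2 * x * √m) * exp (4 * x ^ 2) ^ m := by
      gcongr
      linarith [add_one_le_exp (4 * x ^ 2)]
    _ = (1 + 2 * x * √m) * exp (4 * x ^ 2 * m) := by rw [← exp_nat_mul, mul_comm (m : ℝ)]

lemma sum_Icc_inv_sqrt_mul_eq_sum_antidiagonal (g : ℕ → ℝ) (m : ℕ) :
    ∑ t ∈ Icc 1 m, (√t)⁻¹ * g (m - t) = ∑ p ∈ antidiagonal m, (√p.1)⁻¹ * g p.2 := by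
  rw [Nat.sum_antidiagonal_eq_sum_range_succ (fun i j => (√i)⁻¹ * g j)]
  refine sum_subset (fun t ht => by simp only [mem_Icc, mem_range] at ht ⊢; omega) ?_
  intro t ht ht'
  obtain rfl : t = 0 := by simp only [mem_Icc, mem_range] at ht ht'; omega
  simp

lemma collisionSum_div_four_pow_le {x : ℝ} (hx : 0 ≤ x) (m : ℕ) :
    collisionSum x m / 4 ^ m ≤ (1 + 2 * x * √m) * exp (4 * x ^ 2 * m) := by
  have hnonneg (m : ℕ) : 0 ≤ collisionSum x m / 4 ^ m := by unfold collisionSum; positivity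
  refine le_mul_exp_of_renewal hx hnonneg (fun m => ?_) m
  rw [← sum_Icc_inv_sqrt_mul_eq_sum_antidiagonal (fun s => collisionSum x s / 4 ^ s)]
  calc collisionSum x m / 4 ^ m
      = 1 + x * ∑ t ∈ Icc 1 m,
          (t.centralBinom / 4 ^ t) * (collisionSum x (m - t) / 4 ^ (m - t)) := by
        rw [collisionSum_eq_four_pow_add, add_div, div_self (by positivity), mul_div_assoc, sum_div]
        congr 2
        refine sum_congr rfl fun t ht => ?_
        obtain ⟨s, rfl⟩ := Nat.exists_eq_add_of_le (mem_Icc.mp ht).2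
        rw [pow_add, Nat.add_sub_cancel_left]
        field_simp
    _ ≤ 1 + x * ∑ t ∈ Icc 1 m, (√t)⁻¹ * (collisionSum x (m - t) / 4 ^ (m - t)) := by
      gcongr with t ht
      · exact hnonneg _
      have ht : (0 : ℝ) < √t := sqrt_pos.mpr (by exact_mod_cast (mem_Icc.mp ht).1)
      rw [div_le_iff₀ (by positivity), ← div_eq_inv_mul, le_div_iff₀ ht]
      exact centralBinom_mul_sqrt_le_four_pow t

theorem collision_exponential_moment_bounded_general (β K : ℝ) (hK : 0 < K) :
    ∃ C : ℝ, ∀ N : ℕ, 1 ≤ N →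
      (1 / (4 : ℝ) ^ (⌊K * (N : ℝ)⌋₊)) *
        ∑ ε : Fin ⌊K * (N : ℝ)⌋₊ → Bool, ∑ η : Fin ⌊K * (N : ℝ)⌋₊ → Bool,
          (1 + β ^ 2 * (N : ℝ) ^ (-(1/2) : ℝ)) ^ collisions (⌊K * (N : ℝ)⌋₊) ε η
      ≤ C := by
  refine ⟨(1 + 2 * β ^ 2 * √K) * exp (4 * β ^ 4 * K), fun N hN => ?_⟩
  set m := ⌊K * (N : ℝ)⌋₊
  set x := β ^ 2 * (N : ℝ) ^ (-(1/2) : ℝ)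
  have hN0 : (0 : ℝ) < N := by exact_mod_cast hN
  have hx : 0 ≤ x := by positivity
  have hxm : x ^ 2 * m ≤ β ^ 4 * K := by
    have hxN : x ^ 2 * N = β ^ 4 := by
      have hNsq : ((N : ℝ) ^ (-(1/2) : ℝ)) ^ 2 * N = 1 := by
        rw [← rpow_natCast, ← rpow_mul hN0.le, ← rpow_add_one hN0.ne']
        norm_num
      rw [mul_pow, mul_assoc, hNsq]
      ring
    calc x ^ 2 * m ≤ x ^ 2 * (K * N) := by gcongr; exact Nat.floor_le (by positivity)
      _ = β ^ 4 * K := by rw [← hxN]; ring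
  have hxsqrt : x * √m ≤ β ^ 2 * √K := by
    have h := sqrt_le_sqrt hxm
    rwa [sqrt_mul (sq_nonneg x), sqrt_sq hx, show β ^ 4 = (β ^ 2) ^ 2 by ring,
      sqrt_mul (sq_nonneg _), sqrt_sq (sq_nonneg β)] at h
  calc _ = collisionSum x m / 4 ^ m := by rw [one_div_mul_eq_div]; rfl
    _ ≤ (1 + 2 * x * √m) * exp (4 * x ^ 2 * m) := collisionSum_div_four_pow_le hx m
    _ ≤ (1 + 2 * β ^ 2 * √K) * exp (4 * β ^ 4 * K) := by
      gcongr ?_ * exp ?_ <;> linarith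

/-- For two independent simple random walks Y¹, Y² on ℤ started at 0 (realized here by
averaging uniformly over all ±1 step sequences), the exponential collision moments
E[(1 + β²N^{-1/2})^{#{1 ≤ i ≤ ⌊KN⌋ : Y¹ᵢ = Y²ᵢ}}] are bounded uniformly in N. -/
theorem collision_exponential_moment_bounded (β K : ℝ) (hβ : 0 < β) (hK : 0 < K) :
    ∃ C : ℝ, ∀ N : ℕ, 1 ≤ N →
      (1 / (4 : ℝ) ^ (⌊K * (N : ℝ)⌋₊)) *
        ∑ ε : Fin ⌊K * (N : ℝ)⌋₊ → Bool, ∑ η : Fin ⌊K * (N : ℝ)⌋₊ → Bool,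
          (1 + β ^ 2 * (N : ℝ) ^ (-(1/2) : ℝ)) ^ collisions (⌊K * (N : ℝ)⌋₊) ε η
      ≤ C :=
  collision_exponential_moment_bounded_general β K hK
end
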